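/- Let φ be a real-valued measurable function on ℝ with |φ(x)| ≤ M⟨x⟩^{−δ} for some M > 0 and δ > 5/2. Then for every λ₀ > 0 and every k ∈ {0, 1} there exists a constant C(k, λ₀) > 0, independent of φ and M, such that the function λ ↦ F^±(λ²) is C¹ on (λ₀, ∞) and |d^k/dλ^k F^±(λ²)| ≤ C(k, λ₀) · M² · λ^{−1} for all λ > λ₀. -/

import Mathlib

open MeasureTheory Set

/-- `F^±(λ²) = ⟨R₀^±(λ²)φ, φ⟩` for the one-dimensional free resolvent, whose kernel is
`(±i/(2λ)) e^{±iλ|x−y|}`; the sign `±` is encoded by `σ ∈ {1, -1}`. -/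
noncomputable def resolventFormD1 (σ : ℝ) (φ : ℝ → ℝ) (l : ℝ) : ℂ :=
  ∫ x : ℝ, ∫ y : ℝ,
    ((σ : ℂ) * Complex.I / (2 * (l : ℂ))) *
      Complex.exp ((σ : ℂ) * Complex.I * (l : ℂ) * ((|x - y| : ℝ) : ℂ)) *
      (φ y : ℂ) * (φ x : ℂ)

/-! Write `F^±(λ²) = (±i/(2λ)) G(λ)` with `G(λ) = ∫∫ e^{±iλ|x−y|} φ(y) φ(x) dy dx`. The prefactor
has modulus `1/(2λ)` and derivative of modulus `1/(2λ²)`. `G` is an oscillatory integral in `λ`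
with amplitude `φ ⊗ φ`, so it is bounded by `∫∫ |φ(x) φ(y)|`, and differentiation under the integral
sign makes it `C¹` with derivative bounded by `∫∫ |x − y| |φ(x) φ(y)|`. Since
`|x − y| ≤ 2⟨x⟩⟨y⟩`, the decay `|φ| ≤ M⟨x⟩^{-5/2}` bounds these by `M² (∫⟨x⟩^{-5/2})²` and
`2M² (∫⟨x⟩^{-3/2})²`. -/

open Complex

lemma one_le_sqrt_one_add_sq (x : ℝ) : 1 ≤ √(1 + x ^ 2) :=
  Real.one_le_sqrt.2 (by nlinarith [sq_nonneg x])

lemma abs_sub_le_two_mul_sqrt_one_add_sq (x y : ℝ) :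
    |x - y| ≤ 2 * (√(1 + x ^ 2) * √(1 + y ^ 2)) := by
  have hx : |x| ≤ √(1 + x ^ 2) := Real.abs_le_sqrt (by linarith)
  have hy : |y| ≤ √(1 + y ^ 2) := Real.abs_le_sqrt (by linarith)
  nlinarith [abs_sub x y, one_le_sqrt_one_add_sq x, one_le_sqrt_one_add_sq y]

lemma sqrt_one_add_sq_mul_rpow_neg (x s : ℝ) :
    √(1 + x ^ 2) * √(1 + x ^ 2) ^ (-s) = √(1 + x ^ 2) ^ (-(s - 1)) := by
  rw [show -(s - 1) = 1 + -s by ring, Real.rpow_add (by linarith [one_le_sqrt_one_add_sq x]),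
    Real.rpow_one]

lemma integrable_sqrt_one_add_sq_rpow_neg {s : ℝ} (hs : 1 < s) :
    Integrable fun x : ℝ => √(1 + x ^ 2) ^ (-s) := by
  refine (integrable_rpow_neg_one_add_norm_sq (E := ℝ) (by simpa using hs)).congr
    (ae_of_all _ fun x => ?_)
  simp only [Real.norm_eq_abs, sq_abs]
  rw [Real.sqrt_eq_rpow, ← Real.rpow_mul (by positivity)]
  ring_nf

lemma integral_sqrt_one_add_sq_rpow_neg_pos {s : ℝ} (hs : 1 < s) :
    0 < ∫ x : ℝ, √(1 + x ^ 2) ^ (-s) := by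
  have hpos (x : ℝ) : 0 < √(1 + x ^ 2) ^ (-s) := by positivity
  rw [integral_pos_iff_support_of_nonneg (fun x => (hpos x).le)
    (integrable_sqrt_one_add_sq_rpow_neg hs), Function.support_eq_univ fun x => (hpos x).ne']
  simp

section OscillatoryIntegral

variable {α : Type*} [MeasurableSpace α] {μ : Measure α} {a : α → ℝ} {f : α → ℂ}

noncomputable def oscillatoryIntegral (μ : Measure α) (a : α → ℝ) (f : α → ℂ) (t : ℝ) : ℂ :=
  ∫ p, exp (t * a p * I) * f p ∂μ

lemma norm_exp_mul_I_mul (t r : ℝ) (z : ℂ) : ‖exp (t * r * I) * z‖ = ‖z‖ := by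
  rw [norm_mul, ← ofReal_mul, norm_exp_ofReal_mul_I, one_mul]

lemma norm_oscillatoryIntegral_le (t : ℝ) :
    ‖oscillatoryIntegral μ a f t‖ ≤ ∫ p, ‖f p‖ ∂μ :=
  (norm_integral_le_integral_norm _).trans_eq (by simp_rw [norm_exp_mul_I_mul])

lemma aestronglyMeasurable_exp_mul_I_mul (ha : Measurable a) (hf : AEStronglyMeasurable f μ)
    (t : ℝ) : AEStronglyMeasurable (fun p => exp (t * a p * I) * f p) μ :=
  (by fun_prop : Measurable fun p => exp (t * a p * I)).aestronglyMeasurable.mul hf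

lemma integrable_exp_mul_I_mul (ha : Measurable a) (hf : Integrable f μ) (t : ℝ) :
    Integrable (fun p => exp (t * a p * I) * f p) μ :=
  hf.mono (aestronglyMeasurable_exp_mul_I_mul ha hf.1 t)
    (ae_of_all _ fun p => (norm_exp_mul_I_mul t (a p) (f p)).le)

lemma continuous_oscillatoryIntegral (ha : Measurable a) (hf : Integrable f μ) :
    Continuous (oscillatoryIntegral μ a f) :=
  continuous_of_dominated (aestronglyMeasurable_exp_mul_I_mul ha hf.1)
    (fun t => ae_of_all _ fun p => (norm_exp_mul_I_mul t (a p) (f p)).le) hf.norm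
    (ae_of_all _ fun p => by fun_prop)

lemma hasDerivAt_oscillatoryIntegral (ha : Measurable a) (hf : Integrable f μ)
    (haf : Integrable (fun p => a p * f p) μ) (t : ℝ) :
    HasDerivAt (oscillatoryIntegral μ a f)
      (oscillatoryIntegral μ a (fun p => I * (a p * f p)) t) t := by
  have hderiv (p : α) (s : ℝ) : HasDerivAt (fun s : ℝ => exp (s * a p * I) * f p)
      (exp (s * a p * I) * (I * (a p * f p))) s := by
    refine ((((hasDerivAt_id s).ofReal_comp).mul_const (a p : ℂ)).mul_const I).cexp.mul_const
      (f p) |>.congr_deriv ?_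
    simp only [id, ofReal_one]
    ring
  refine (hasDerivAt_integral_of_dominated_loc_of_deriv_le (Metric.ball_mem_nhds t one_pos)
    (Filter.Eventually.of_forall (aestronglyMeasurable_exp_mul_I_mul ha hf.1))
    (integrable_exp_mul_I_mul ha hf t)
    (aestronglyMeasurable_exp_mul_I_mul ha (haf.1.const_mul I) t)
    (ae_of_all _ fun p s _ => ?_) haf.norm
    (ae_of_all _ fun p s _ => hderiv p s)).2
  rw [norm_exp_mul_I_mul, norm_mul, norm_I, one_mul]

lemma deriv_oscillatoryIntegral (ha : Measurable a) (hf : Integrable f μ)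
    (haf : Integrable (fun p => a p * f p) μ) :
    deriv (oscillatoryIntegral μ a f) = oscillatoryIntegral μ a (fun p => I * (a p * f p)) :=
  funext fun t => (hasDerivAt_oscillatoryIntegral ha hf haf t).deriv

lemma contDiff_oscillatoryIntegral (ha : Measurable a) (hf : Integrable f μ)
    (haf : Integrable (fun p => a p * f p) μ) : ContDiff ℝ 1 (oscillatoryIntegral μ a f) :=
  contDiff_one_iff_deriv.2 ⟨fun t => (hasDerivAt_oscillatoryIntegral ha hf haf t).differentiableAt,
    deriv_oscillatoryIntegral ha hf haf ▸ continuous_oscillatoryIntegral ha (haf.const_mul I)⟩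

end OscillatoryIntegral

lemma integral_norm_le_mul_integral_mul_integral {α β E : Type*} [MeasurableSpace α]
    [MeasurableSpace β] {μ : Measure α} {ν : Measure β} [SFinite μ] [SFinite ν]
    [NormedAddCommGroup E]
    {F : α × β → E} {g₁ : α → ℝ} {g₂ : β → ℝ} {C : ℝ} (hg₁ : Integrable g₁ μ)
    (hg₂ : Integrable g₂ ν) (hF : ∀ p, ‖F p‖ ≤ C * (g₁ p.1 * g₂ p.2)) :
    ∫ p, ‖F p‖ ∂μ.prod ν ≤ C * ((∫ x, g₁ x ∂μ) * ∫ y, g₂ y ∂ν) := by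
  rw [← integral_prod_mul, ← integral_const_mul]
  exact integral_mono_of_nonneg (ae_of_all _ fun p => norm_nonneg _)
    ((hg₁.mul_prod hg₂).const_mul C) (ae_of_all _ hF)

section Resolvent

noncomputable def resolventCoeff (σ l : ℝ) : ℂ := σ * I / (2 * l)

def resolventPhase (σ : ℝ) (p : ℝ × ℝ) : ℝ := σ * |p.1 - p.2|

def resolventAmplitude (φ : ℝ → ℝ) (p : ℝ × ℝ) : ℂ := φ p.2 * φ p.1

variable {σ : ℝ} {φ : ℝ → ℝ} {M s : ℝ}

lemma measurable_resolventPhase (σ : ℝ) : Measurable (resolventPhase σ) := by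
  unfold resolventPhase; fun_prop

lemma resolventCoeff_eq_mul_inv (σ : ℝ) :
    resolventCoeff σ = fun t : ℝ => σ * I * (2 * (t : ℂ))⁻¹ :=
  funext fun _ => div_eq_mul_inv _ _

lemma norm_resolventCoeff (hσ : |σ| = 1) {l : ℝ} (hl : 0 < l) :
    ‖resolventCoeff σ l‖ = (2 * l)⁻¹ := by
  simp [resolventCoeff, hσ, abs_of_pos hl]

lemma hasDerivAt_resolventCoeff (σ : ℝ) {l : ℝ} (hl : l ≠ 0) :
    HasDerivAt (resolventCoeff σ) (-resolventCoeff σ l / l) l := by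
  rw [resolventCoeff_eq_mul_inv]
  refine (((hasDerivAt_id l).ofReal_comp.const_mul (2 : ℂ)).inv (by simpa using hl)).const_mul
    ((σ : ℂ) * I) |>.congr_deriv ?_
  simp only [id, ofReal_one]
  field_simp

lemma contDiffOn_resolventCoeff (σ : ℝ) (n : WithTop ℕ∞) :
    ContDiffOn ℝ n (resolventCoeff σ) {0}ᶜ :=
  have hden : ContDiff ℝ n fun t : ℝ => 2 * (t : ℂ) := contDiff_const.mul ofRealCLM.contDiff
  resolventCoeff_eq_mul_inv σ ▸ contDiffOn_const.mul (hden.contDiffOn.inv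
    fun _ hl => mul_ne_zero two_ne_zero (ofReal_ne_zero.2 hl))

lemma norm_deriv_resolventCoeff_mul_le (hσ : |σ| = 1) {G : ℝ → ℂ} {l : ℝ} (hl : 0 < l)
    (hG : DifferentiableAt ℝ G l) :
    ‖deriv (fun t => resolventCoeff σ t * G t) l‖ ≤
      ‖G l‖ / (2 * l ^ 2) + ‖deriv G l‖ / (2 * l) := by
  have h : HasDerivAt (fun t => resolventCoeff σ t * G t) _ l :=
    (hasDerivAt_resolventCoeff σ hl.ne').mul hG.hasDerivAt
  rw [h.deriv]
  refine (norm_add_le _ _).trans_eq ?_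
  rw [norm_mul, norm_mul, norm_div, norm_neg, norm_resolventCoeff hσ hl, norm_real,
    Real.norm_eq_abs, abs_of_pos hl]
  field_simp

lemma resolventFormD1_eq (hφ : Integrable (resolventAmplitude φ) (volume.prod volume)) (l : ℝ) :
    resolventFormD1 σ φ l = resolventCoeff σ l *
      oscillatoryIntegral (volume.prod volume) (resolventPhase σ) (resolventAmplitude φ) l := by
  rw [oscillatoryIntegral, ← integral_const_mul, integral_prod _
    ((integrable_exp_mul_I_mul (measurable_resolventPhase σ) hφ l).const_mul _)]
  simp only [resolventFormD1, resolventCoeff, resolventPhase, resolventAmplitude]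
  congr 1; ext x; congr 1; ext y
  push_cast
  ring_nf

lemma norm_resolventAmplitude_le (hφ : ∀ x, |φ x| ≤ M * √(1 + x ^ 2) ^ (-s)) (p : ℝ × ℝ) :
    ‖resolventAmplitude φ p‖ ≤
      M ^ 2 * (√(1 + p.1 ^ 2) ^ (-s) * √(1 + p.2 ^ 2) ^ (-s)) := by
  rw [resolventAmplitude, norm_mul, norm_real, norm_real, Real.norm_eq_abs, Real.norm_eq_abs]
  nlinarith [hφ p.1, hφ p.2, abs_nonneg (φ p.1), abs_nonneg (φ p.2)]

lemma norm_resolventPhase_mul_amplitude_le (hφ : ∀ x, |φ x| ≤ M * √(1 + x ^ 2) ^ (-s))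
    (p : ℝ × ℝ) :
    ‖(resolventPhase σ p : ℂ) * resolventAmplitude φ p‖ ≤
      2 * |σ| * M ^ 2 * (√(1 + p.1 ^ 2) ^ (-(s - 1)) * √(1 + p.2 ^ 2) ^ (-(s - 1))) := by
  rw [norm_mul, norm_real, Real.norm_eq_abs, resolventPhase, abs_mul, abs_abs,
    ← sqrt_one_add_sq_mul_rpow_neg, ← sqrt_one_add_sq_mul_rpow_neg]
  calc |σ| * |p.1 - p.2| * ‖resolventAmplitude φ p‖
      ≤ |σ| * (2 * (√(1 + p.1 ^ 2) * √(1 + p.2 ^ 2))) *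
          (M ^ 2 * (√(1 + p.1 ^ 2) ^ (-s) * √(1 + p.2 ^ 2) ^ (-s))) := by
        gcongr
        exacts [abs_sub_le_two_mul_sqrt_one_add_sq _ _, norm_resolventAmplitude_le hφ p]
    _ = _ := by ring

lemma integrable_resolventAmplitude (hφm : Measurable φ)
    (hφ : ∀ x, |φ x| ≤ M * √(1 + x ^ 2) ^ (-s)) (hs : 1 < s) :
    Integrable (resolventAmplitude φ) (volume.prod volume) :=
  (((integrable_sqrt_one_add_sq_rpow_neg hs).mul_prod
    (integrable_sqrt_one_add_sq_rpow_neg hs)).const_mul _).mono'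
    (by unfold resolventAmplitude; fun_prop) (ae_of_all _ (norm_resolventAmplitude_le hφ))

lemma integrable_resolventPhase_mul_amplitude (hφm : Measurable φ)
    (hφ : ∀ x, |φ x| ≤ M * √(1 + x ^ 2) ^ (-s)) (hs : 2 < s) :
    Integrable (fun p => (resolventPhase σ p : ℂ) * resolventAmplitude φ p) (volume.prod volume) :=
  have hs' : 1 < s - 1 := by linarith
  (((integrable_sqrt_one_add_sq_rpow_neg hs').mul_prod
    (integrable_sqrt_one_add_sq_rpow_neg hs')).const_mul _).mono'
    (by unfold resolventPhase resolventAmplitude; fun_prop)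
    (ae_of_all _ (norm_resolventPhase_mul_amplitude_le hφ))

lemma norm_oscillatoryIntegral_resolvent_le (hφ : ∀ x, |φ x| ≤ M * √(1 + x ^ 2) ^ (-s))
    (hs : 1 < s) (l : ℝ) :
    ‖oscillatoryIntegral (volume.prod volume) (resolventPhase σ) (resolventAmplitude φ) l‖ ≤
      M ^ 2 * (∫ x : ℝ, √(1 + x ^ 2) ^ (-s)) ^ 2 :=
  (norm_oscillatoryIntegral_le l).trans <| (integral_norm_le_mul_integral_mul_integral
    (integrable_sqrt_one_add_sq_rpow_neg hs) (integrable_sqrt_one_add_sq_rpow_neg hs)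
    (norm_resolventAmplitude_le hφ)).trans_eq (by ring)

lemma norm_deriv_oscillatoryIntegral_resolvent_le (hφm : Measurable φ)
    (hφ : ∀ x, |φ x| ≤ M * √(1 + x ^ 2) ^ (-s)) (hs : 2 < s) (l : ℝ) :
    ‖deriv (oscillatoryIntegral (volume.prod volume) (resolventPhase σ)
      (resolventAmplitude φ)) l‖ ≤ 2 * |σ| * M ^ 2 * (∫ x : ℝ, √(1 + x ^ 2) ^ (-(s - 1))) ^ 2 := by
  rw [deriv_oscillatoryIntegral (measurable_resolventPhase σ)
    (integrable_resolventAmplitude hφm hφ (by linarith))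
    (integrable_resolventPhase_mul_amplitude hφm hφ hs)]
  have hs' : 1 < s - 1 := by linarith
  refine (norm_oscillatoryIntegral_le l).trans <| (integral_norm_le_mul_integral_mul_integral
    (integrable_sqrt_one_add_sq_rpow_neg hs') (integrable_sqrt_one_add_sq_rpow_neg hs')
    (C := 2 * |σ| * M ^ 2) fun p => ?_).trans_eq (by ring)
  rw [norm_mul, norm_I, one_mul]
  exact norm_resolventPhase_mul_amplitude_le hφ p

end Resolvent

theorem high_energy_F_bounds_d1 (lam₀ : ℝ) (hlam₀ : 0 < lam₀) :
    ∃ C₀ > 0, ∃ C₁ > 0, ∀ σ : ℝ, (σ = 1 ∨ σ = -1) →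
      ∀ (φ : ℝ → ℝ) (M δ : ℝ), Measurable φ → 0 < M → 5/2 < δ →
        (∀ x : ℝ, |φ x| ≤ M * Real.sqrt (1 + x ^ 2) ^ (-δ)) →
        ContDiffOn ℝ 1 (resolventFormD1 σ φ) (Ioi lam₀) ∧
        ∀ l ∈ Ioi lam₀,
          ‖resolventFormD1 σ φ l‖ ≤ C₀ * M ^ 2 * l⁻¹ ∧
          ‖deriv (resolventFormD1 σ φ) l‖ ≤ C₁ * M ^ 2 * l⁻¹ := by
  set K₀ := ∫ x : ℝ, √(1 + x ^ 2) ^ (-(5 / 2 : ℝ))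
  set K₁ := ∫ x : ℝ, √(1 + x ^ 2) ^ (-(5 / 2 - 1 : ℝ))
  have hK₀ : 0 < K₀ := integral_sqrt_one_add_sq_rpow_neg_pos (by norm_num)
  refine ⟨K₀ ^ 2 / 2, by positivity, K₀ ^ 2 / (2 * lam₀) + K₁ ^ 2, by positivity,
    fun σ hσ φ M δ hφm hM hδ hφδ => ?_⟩
  have hσ₁ : |σ| = 1 := by rcases hσ with rfl | rfl <;> simp
  have hφ (x : ℝ) : |φ x| ≤ M * √(1 + x ^ 2) ^ (-(5 / 2 : ℝ)) :=
    (hφδ x).trans (by gcongr; exact one_le_sqrt_one_add_sq x)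
  set G := oscillatoryIntegral (volume.prod volume) (resolventPhase σ) (resolventAmplitude φ)
  have hG := norm_oscillatoryIntegral_resolvent_le (σ := σ) hφ (by norm_num)
  have hG' := norm_deriv_oscillatoryIntegral_resolvent_le (σ := σ) hφm hφ (by norm_num)
  have hGd : ContDiff ℝ 1 G := contDiff_oscillatoryIntegral (measurable_resolventPhase σ)
    (integrable_resolventAmplitude hφm hφ (by norm_num))
    (integrable_resolventPhase_mul_amplitude hφm hφ (by norm_num))
  rw [funext (resolventFormD1_eq (integrable_resolventAmplitude hφm hφ (by norm_num)))]
  refine ⟨((contDiffOn_resolventCoeff σ 1).mono fun l hl => (hlam₀.trans hl).ne').mul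
    hGd.contDiffOn, fun l hl => ?_⟩
  have hl₀ : 0 < l := hlam₀.trans hl
  constructor
  · rw [norm_mul, norm_resolventCoeff hσ₁ hl₀]
    calc (2 * l)⁻¹ * ‖G l‖ ≤ (2 * l)⁻¹ * (M ^ 2 * K₀ ^ 2) := by gcongr; exact hG l
      _ = K₀ ^ 2 / 2 * M ^ 2 * l⁻¹ := by field_simp
  · refine (norm_deriv_resolventCoeff_mul_le hσ₁ hl₀ (hGd.differentiable one_ne_zero l)).trans ?_
    calc ‖G l‖ / (2 * l ^ 2) + ‖deriv G l‖ / (2 * l)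
        ≤ M ^ 2 * K₀ ^ 2 / (2 * l ^ 2) + 2 * |σ| * M ^ 2 * K₁ ^ 2 / (2 * l) := by
          gcongr; exacts [hG l, hG' l]
      _ = (K₀ ^ 2 / (2 * l) + K₁ ^ 2) * M ^ 2 * l⁻¹ := by rw [hσ₁]; field_simp
      _ ≤ (K₀ ^ 2 / (2 * lam₀) + K₁ ^ 2) * M ^ 2 * l⁻¹ := by gcongr; exact hl.le
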